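/- Let D be a spread-out step distribution with constants (C₁, c₂, C₂, δ₂, δ₃). Then for all x ∈ ℤ^d and t ≥ 0: 0 ≤ I_{t,1}(x) ≤ exp(−‖x‖_∞/L + σ²t/(dL²)); moreover, setting t₀ := dL‖x‖_∞/(2σ²), for all t ≥ t₀ one has I_{t,1}(x) ≤ exp(−d‖x‖_∞²/(4σ²t)). -/

import Mathlib

open scoped BigOperators
open MeasureTheory

/-- The Euclidean norm of a point of `ℤ^d`. -/
noncomputable def znorm {d : ℕ} (x : Fin d → ℤ) : ℝ :=
  Real.sqrt (∑ i, ((x i : ℝ)) ^ 2)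

/-- The Euclidean norm of a point of `ℝ^d`. -/
noncomputable def rnorm {d : ℕ} (k : Fin d → ℝ) : ℝ :=
  Real.sqrt (∑ i, (k i) ^ 2)

/-- The supremum norm `‖x‖_∞` of a point of `ℤ^d`, as a real number. -/
noncomputable def supnorm {d : ℕ} (x : Fin d → ℤ) : ℝ :=
  ((Finset.univ.sup fun i => (x i).natAbs : ℕ) : ℝ)

/-- A function on `ℤ^d` is `ℤ^d`-symmetric if it is invariant under permutations of the
coordinates and sign changes of individual coordinates of its argument. -/
def ZdSymm {d : ℕ} (f : (Fin d → ℤ) → ℝ) : Prop :=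
  ∀ (σ : Equiv.Perm (Fin d)) (e : Fin d → Bool) (x : Fin d → ℤ),
    f (fun i => if e i then -(x (σ i)) else x (σ i)) = f x

/-- The Fourier transform of a `ℤ^d`-symmetric summable function, which is real:
`f̂(k) = ∑_x f(x) cos(k·x)`. -/
noncomputable def dhat {d : ℕ} (D : (Fin d → ℤ) → ℝ) (k : Fin d → ℝ) : ℝ :=
  ∑' x : Fin d → ℤ, D x * Real.cos (∑ i, k i * (x i : ℝ))

/-- The torus `[-π, π]^d`. -/
def box (d : ℕ) : Set (Fin d → ℝ) := Set.Icc (fun _ => -Real.pi) (fun _ => Real.pi)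

/-- A spread-out step distribution on `ℤ^d` with parameter `L` and
constants `(C₁, c₂, C₂, δ₂, δ₃)`. -/
structure SpreadOut (d : ℕ) (L C₁ c₂ C₂ δ₂ δ₃ : ℝ) where
  D : (Fin d → ℤ) → ℝ
  nonneg : ∀ x, 0 ≤ D x
  symm : ZdSymm D
  supp : ∀ x, L < supnorm x → D x = 0
  total : (∑' x : Fin d → ℤ, D x) = 1
  unif : ∀ x, D x ≤ C₁ * L ^ (-(d : ℝ))
  var_lower : c₂ * L ^ 2 ≤ ∑' x : Fin d → ℤ, znorm x ^ 2 * D x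
  var_upper : (∑' x : Fin d → ℤ, znorm x ^ 2 * D x) ≤ C₂ * L ^ 2
  fourier_small : ∀ k : Fin d → ℝ, rnorm k ≤ 1 / L → δ₂ * L ^ 2 * rnorm k ^ 2 ≤ 1 - dhat D k
  fourier_large : ∀ k ∈ box d, 1 / L ≤ rnorm k → δ₃ ≤ 1 - dhat D k

/-- The variance `σ² = ∑_x |x|² D(x)` of a spread-out step distribution. -/
noncomputable def sigma2 {d : ℕ} {L C₁ c₂ C₂ δ₂ δ₃ : ℝ}
    (S : SpreadOut d L C₁ c₂ C₂ δ₂ δ₃) : ℝ :=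
  ∑' x : Fin d → ℤ, znorm x ^ 2 * S.D x

/-- The random walk two-point function
`S_μ(x) = ∫_{[-π,π]^d} e^{-ik·x} (1 - μ D̂(k))⁻¹ dᵈk/(2π)^d`, written in its real form. -/
noncomputable def Smu {d : ℕ} {L C₁ c₂ C₂ δ₂ δ₃ : ℝ}
    (S : SpreadOut d L C₁ c₂ C₂ δ₂ δ₃) (μ : ℝ) (x : Fin d → ℤ) : ℝ :=
  (2 * Real.pi) ^ (-(d : ℝ)) *
    ∫ k in box d, Real.cos (∑ i, k i * (x i : ℝ)) / (1 - μ * dhat S.D k)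

/-- `I_{t,μ}(x) = ∫_{[-π,π]^d} e^{-ik·x} e^{-t(1-μD̂(k))} dᵈk/(2π)^d`, in its real form. -/
noncomputable def Ifun {d : ℕ} {L C₁ c₂ C₂ δ₂ δ₃ : ℝ}
    (S : SpreadOut d L C₁ c₂ C₂ δ₂ δ₃) (t μ : ℝ) (x : Fin d → ℤ) : ℝ :=
  (2 * Real.pi) ^ (-(d : ℝ)) *
    ∫ k in box d, Real.cos (∑ i, k i * (x i : ℝ)) * Real.exp (-t * (1 - μ * dhat S.D k))

section AuxFourier

lemma box_eq_pi (d : ℕ) : box d = Set.pi Set.univ (fun _ : Fin d => Set.Icc (-Real.pi) Real.pi) := by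
  rw [Set.pi_univ_Icc]; rfl

lemma measurableSet_box (d : ℕ) : MeasurableSet (box d) := measurableSet_Icc

lemma isCompact_box (d : ℕ) : IsCompact (box d) := isCompact_Icc

-- single variable integral
lemma single_exp_integral (n : ℤ) :
    (∫ u : ℝ, (Set.Icc (-Real.pi) Real.pi).indicator
      (fun u : ℝ => Complex.exp ((n * Complex.I) * u)) u) =
    if n = 0 then (2 * Real.pi : ℂ) else 0 := by
  rw [MeasureTheory.integral_indicator measurableSet_Icc,
    MeasureTheory.integral_Icc_eq_integral_Ioc,
    ← intervalIntegral.integral_of_le (by linarith [Real.pi_pos] : -Real.pi ≤ Real.pi)]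
  by_cases hn : n = 0
  · subst hn
    simp [intervalIntegral.integral_const, Complex.ofReal_mul]
    ring
  · have hc : (n : ℂ) * Complex.I ≠ 0 := by
      simp [Complex.I_ne_zero, hn]
    rw [integral_exp_mul_complex hc]
    have h1 : (n : ℂ) * Complex.I * (Real.pi : ℂ) = (n : ℂ) * (Real.pi * Complex.I) := by ring
    have h2 : (n : ℂ) * Complex.I * ((-Real.pi : ℝ) : ℂ) = (-n : ℂ) * (Real.pi * Complex.I) := by
      push_cast; ring
    rw [h1, h2]
    have h3 : Complex.exp ((n : ℂ) * (Real.pi * Complex.I)) = (-1 : ℂ) ^ n := by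
      rw [Complex.exp_int_mul, Complex.exp_pi_mul_I]
    have h4 : Complex.exp ((-n : ℂ) * (Real.pi * Complex.I)) = (-1 : ℂ) ^ n := by
      have : ((-n : ℤ) : ℂ) = (-n : ℂ) := by push_cast; ring
      rw [← this, Complex.exp_int_mul, Complex.exp_pi_mul_I, zpow_neg, ← inv_zpow, inv_neg_one]
    rw [h3, h4]
    simp [hn]

lemma indicator_box_prod {d : ℕ} (g : Fin d → ℝ → ℂ) (k : Fin d → ℝ) :
    (box d).indicator (fun k => ∏ i, g i (k i)) k =
      ∏ i, (Set.Icc (-Real.pi) Real.pi).indicator (g i) (k i) := by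
  by_cases hk : k ∈ box d
  · rw [Set.indicator_of_mem hk]
    rw [box_eq_pi, Set.mem_pi] at hk
    exact Finset.prod_congr rfl fun i _ =>
      (Set.indicator_of_mem (hk i (Set.mem_univ i)) (g i)).symm
  · rw [Set.indicator_of_notMem hk]
    rw [box_eq_pi, Set.mem_pi] at hk
    push_neg at hk
    obtain ⟨i, _, hi⟩ := hk
    exact (Finset.prod_eq_zero (Finset.mem_univ i)
      (Set.indicator_of_notMem hi (g i))).symm

lemma cos_box_integral {d : ℕ} (x : Fin d → ℤ) :
    (∫ k in box d, Real.cos (∑ i, k i * (x i : ℝ))) =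
      if x = 0 then (2 * Real.pi) ^ d else 0 := by
  set F : (Fin d → ℝ) → ℂ := fun k => ∏ i, Complex.exp (((x i : ℂ) * Complex.I) * (k i : ℝ)) with hFdef
  have h_re : ∀ k : Fin d → ℝ, Real.cos (∑ i, k i * (x i : ℝ)) = (F k).re := by
    intro k
    have : F k = Complex.exp (((∑ i, k i * (x i : ℝ) : ℝ) : ℂ) * Complex.I) := by
      simp only [hFdef]
      rw [← Complex.exp_sum]
      congr 1
      push_cast
      rw [Finset.sum_mul]
      exact Finset.sum_congr rfl fun i _ => by ring
    rw [this, Complex.exp_ofReal_mul_I_re]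
  have hFc : Continuous F := by
    apply continuous_finset_prod
    intro i _
    exact Complex.continuous_exp.comp (by continuity)
  have hInt : IntegrableOn F (box d) := hFc.continuousOn.integrableOn_compact (isCompact_box d)
  calc (∫ k in box d, Real.cos (∑ i, k i * (x i : ℝ)))
      = ∫ k in box d, (F k).re := by simp_rw [h_re]
    _ = (∫ k in box d, F k).re := by
        have := integral_re hInt
        simpa [RCLike.re_to_complex] using this
    _ = (if x = 0 then ((2 * Real.pi : ℝ) : ℂ) ^ d else 0).re := by
        congr 1
        rw [← MeasureTheory.integral_indicator (measurableSet_box d)]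
        have : (box d).indicator F = fun k =>
            ∏ i, (Set.Icc (-Real.pi) Real.pi).indicator
              (fun u : ℝ => Complex.exp (((x i : ℂ) * Complex.I) * u)) (k i) := by
          funext k
          rw [hFdef]
          exact indicator_box_prod (fun i u => Complex.exp (((x i : ℂ) * Complex.I) * u)) k
        rw [this, MeasureTheory.integral_fintype_prod_volume_eq_prod (ι := Fin d)]
        have hfac : ∀ i, (∫ u : ℝ, (Set.Icc (-Real.pi) Real.pi).indicator
            (fun u : ℝ => Complex.exp (((x i : ℂ) * Complex.I) * u)) u) =
            if x i = 0 then (2 * Real.pi : ℂ) else 0 := by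
          intro i
          have := single_exp_integral (x i)
          simpa using this
        simp_rw [hfac]
        by_cases hx : x = 0
        · subst hx
          simp
        · have : ∃ i, x i ≠ 0 := by
            by_contra h
            push_neg at h
            exact hx (funext h)
          obtain ⟨i, hi⟩ := this
          rw [if_neg hx]
          exact Finset.prod_eq_zero (Finset.mem_univ i) (by rw [if_neg hi])
    _ = if x = 0 then (2 * Real.pi) ^ d else 0 := by
        by_cases hx : x = 0
        · rw [if_pos hx, if_pos hx, ← Complex.ofReal_pow, Complex.ofReal_re]
        · rw [if_neg hx, if_neg hx, Complex.zero_re]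

end AuxFourier
section AuxNorm

-- integer box
noncomputable def boxN (d : ℕ) (v : ℤ) : Finset (Fin d → ℤ) :=
  Finset.Icc (fun _ => -v) (fun _ => v)

lemma mem_boxN {d : ℕ} {v : ℤ} {x : Fin d → ℤ} :
    x ∈ boxN d v ↔ ∀ i, |x i| ≤ v := by
  simp [boxN, Finset.mem_Icc, Pi.le_def, forall_and, abs_le, and_comm]

noncomputable def boxA (d : ℕ) (L : ℝ) : Finset (Fin d → ℤ) := boxN d (⌈L⌉₊ : ℤ)

lemma supnorm_ge {d : ℕ} (x : Fin d → ℤ) (i : Fin d) : ((x i).natAbs : ℝ) ≤ supnorm x := by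
  have : (x i).natAbs ≤ Finset.univ.sup fun i => (x i).natAbs :=
    Finset.le_sup (f := fun i => (x i).natAbs) (Finset.mem_univ i)
  unfold supnorm
  exact_mod_cast this

lemma supnorm_nonneg {d : ℕ} (x : Fin d → ℤ) : 0 ≤ supnorm x := Nat.cast_nonneg _

lemma supnorm_gt_of_not_mem {d : ℕ} {L : ℝ} {x : Fin d → ℤ}
    (hx : x ∉ boxA d L) : L < supnorm x := by
  rw [boxA, mem_boxN] at hx
  push_neg at hx
  obtain ⟨i, hi⟩ := hx
  rw [Int.abs_eq_natAbs] at hi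
  have hN : (⌈L⌉₊ : ℤ) < (x i).natAbs := by omega
  have h1 : (⌈L⌉₊ : ℝ) < ((x i).natAbs : ℝ) := by exact_mod_cast hN
  exact lt_of_le_of_lt (Nat.le_ceil L) (lt_of_lt_of_le h1 (supnorm_ge x i))

lemma abs_le_of_D_ne {d : ℕ} {L C₁ c₂ C₂ δ₂ δ₃ : ℝ} (S : SpreadOut d L C₁ c₂ C₂ δ₂ δ₃)
    {y : Fin d → ℤ} (hy : S.D y ≠ 0) (i : Fin d) : |(y i : ℝ)| ≤ L := by
  have h : ¬ L < supnorm y := fun h => hy (S.supp y h)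
  push_neg at h
  refine le_trans ?_ (le_trans (supnorm_ge y i) h)
  rw [show ((y i).natAbs : ℝ) = |(y i : ℝ)| by rw [Nat.cast_natAbs, Int.cast_abs]]

lemma D_zero_outside {d : ℕ} {L C₁ c₂ C₂ δ₂ δ₃ : ℝ} (S : SpreadOut d L C₁ c₂ C₂ δ₂ δ₃)
    {x : Fin d → ℤ} (hx : x ∉ boxA d L) : S.D x = 0 :=
  S.supp x (supnorm_gt_of_not_mem hx)

lemma sum_D_eq_one {d : ℕ} {L C₁ c₂ C₂ δ₂ δ₃ : ℝ} (S : SpreadOut d L C₁ c₂ C₂ δ₂ δ₃) :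
    ∑ x ∈ boxA d L, S.D x = 1 := by
  rw [← S.total, tsum_eq_sum (fun x hx => D_zero_outside S hx)]

end AuxNorm
section AuxDhat

variable {d : ℕ} {L C₁ c₂ C₂ δ₂ δ₃ : ℝ}

/-- finite-sum version of the Fourier transform -/
noncomputable def dF (S : SpreadOut d L C₁ c₂ C₂ δ₂ δ₃) (k : Fin d → ℝ) : ℝ :=
  ∑ y ∈ boxA d L, S.D y * Real.cos (∑ i, k i * (y i : ℝ))

lemma dhat_eq_dF (S : SpreadOut d L C₁ c₂ C₂ δ₂ δ₃) (k : Fin d → ℝ) :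
    dhat S.D k = dF S k :=
  tsum_eq_sum (fun y hy => by rw [D_zero_outside S hy, zero_mul])

lemma dF_cont (S : SpreadOut d L C₁ c₂ C₂ δ₂ δ₃) : Continuous (dF S) := by
  apply continuous_finset_sum
  intro y _
  apply Continuous.mul continuous_const
  apply Real.continuous_cos.comp
  apply continuous_finset_sum
  intro i _
  exact (continuous_apply i).mul continuous_const

lemma abs_dF_le_one (S : SpreadOut d L C₁ c₂ C₂ δ₂ δ₃) (k : Fin d → ℝ) : |dF S k| ≤ 1 := by
  calc |dF S k| ≤ ∑ y ∈ boxA d L, |S.D y * Real.cos (∑ i, k i * (y i : ℝ))| :=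
        Finset.abs_sum_le_sum_abs _ _
    _ ≤ ∑ y ∈ boxA d L, S.D y := by
        apply Finset.sum_le_sum
        intro y _
        rw [abs_mul, abs_of_nonneg (S.nonneg y)]
        calc S.D y * |Real.cos (∑ i, k i * (y i : ℝ))| ≤ S.D y * 1 :=
              mul_le_mul_of_nonneg_left (Real.abs_cos_le_one _) (S.nonneg y)
          _ = S.D y := mul_one _
    _ = 1 := sum_D_eq_one S

lemma sigma2_eq_sum (S : SpreadOut d L C₁ c₂ C₂ δ₂ δ₃) :
    sigma2 S = ∑ y ∈ boxA d L, znorm y ^ 2 * S.D y :=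
  tsum_eq_sum (fun y hy => by rw [D_zero_outside S hy, mul_zero])

lemma sigma2_pos (S : SpreadOut d L C₁ c₂ C₂ δ₂ δ₃) (hc₂ : 0 < c₂) (hL : 1 ≤ L) :
    0 < sigma2 S := by
  have h1 : (0:ℝ) < c₂ * L ^ 2 := by positivity
  exact lt_of_lt_of_le h1 S.var_lower

/-- the second moment of a single coordinate -/
lemma moment_coord (S : SpreadOut d L C₁ c₂ C₂ δ₂ δ₃) (hd : 1 ≤ d) (j : Fin d) :
    ∑ y ∈ boxA d L, S.D y * ((y j : ℝ)) ^ 2 = sigma2 S / d := by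
  classical
  -- all coordinates give the same sum
  have key : ∀ j' : Fin d, ∑ y ∈ boxA d L, S.D y * ((y j' : ℝ)) ^ 2 =
      ∑ y ∈ boxA d L, S.D y * ((y j : ℝ)) ^ 2 := by
    intro j'
    set sw := Equiv.swap j j' with hsw
    apply Finset.sum_nbij' (i := fun y => y ∘ sw) (j := fun y => y ∘ sw)
    · intro y hy
      rw [boxA, mem_boxN] at hy ⊢
      intro i
      exact hy (sw i)
    · intro y hy
      rw [boxA, mem_boxN] at hy ⊢
      intro i
      exact hy (sw i)
    · intro y _
      funext i
      rw [hsw]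
      simp [Equiv.swap_apply_self]
    · intro y _
      funext i
      rw [hsw]
      simp [Equiv.swap_apply_self]
    · intro y _
      have hD : S.D (y ∘ sw) = S.D y := by
        have := S.symm sw (fun _ => false) y
        exact (by simpa using this : S.D (fun i => y (sw i)) = S.D y)
      rw [hD]
      congr 2
      simp [Function.comp, hsw, Equiv.swap_apply_left]
  -- sum over coordinates
  have hsum : ∑ j' : Fin d, ∑ y ∈ boxA d L, S.D y * ((y j' : ℝ)) ^ 2 = sigma2 S := by
    rw [Finset.sum_comm, sigma2_eq_sum S]
    apply Finset.sum_congr rfl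
    intro y _
    rw [← Finset.mul_sum]
    rw [znorm]
    rw [Real.sq_sqrt (by positivity)]
    ring
  have hconst : ∑ j' : Fin d, ∑ y ∈ boxA d L, S.D y * ((y j' : ℝ)) ^ 2 =
      d * ∑ y ∈ boxA d L, S.D y * ((y j : ℝ)) ^ 2 := by
    rw [Finset.sum_congr rfl (fun j' _ => key j')]
    rw [Finset.sum_const, Finset.card_univ, Fintype.card_fin, nsmul_eq_mul]
  have hd0 : (d : ℝ) ≠ 0 := by positivity
  rw [hconst] at hsum
  field_simp
  linarith [hsum]

end AuxDhat
section AuxMM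

variable {d : ℕ} {L C₁ c₂ C₂ δ₂ δ₃ : ℝ}

noncomputable def MM (S : SpreadOut d L C₁ c₂ C₂ δ₂ δ₃) : ℕ → (Fin d → ℤ) → ℝ
  | 0, x => if x = 0 then 1 else 0
  | (n+1), x => ∑ y ∈ boxA d L, S.D y * ((MM S n (x - y) + MM S n (x + y)) / 2)

lemma MM_nonneg (S : SpreadOut d L C₁ c₂ C₂ δ₂ δ₃) (n : ℕ) (x : Fin d → ℤ) :
    0 ≤ MM S n x := by
  induction n generalizing x with
  | zero => rw [MM]; positivity
  | succ n ih =>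
    rw [MM]
    apply Finset.sum_nonneg
    intro y _
    have h1 := ih (x - y)
    have h2 := ih (x + y)
    have := S.nonneg y
    positivity

lemma MM_vanish (S : SpreadOut d L C₁ c₂ C₂ δ₂ δ₃) (n : ℕ) {x : Fin d → ℤ} {i : Fin d}
    (h : (n * ⌈L⌉₊ : ℤ) < |x i|) : MM S n x = 0 := by
  induction n generalizing x with
  | zero =>
    rw [MM, if_neg]
    intro hx
    rw [hx] at h
    simp at h
  | succ n ih =>
    rw [MM]
    apply Finset.sum_eq_zero
    intro y hy
    rw [boxA, mem_boxN] at hy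
    have hyi := hy i
    have h1 : (n * ⌈L⌉₊ : ℤ) < |(x - y) i| := by
      have habs := abs_sub_abs_le_abs_sub (x i) (y i)
      have hxy : (x - y) i = x i - y i := rfl
      rw [hxy]
      push_cast at h
      linarith
    have h2 : (n * ⌈L⌉₊ : ℤ) < |(x + y) i| := by
      have habs := abs_sub_abs_le_abs_sub (x i) (-(y i))
      rw [abs_neg, sub_neg_eq_add] at habs
      have hxy : (x + y) i = x i + y i := rfl
      rw [hxy]
      push_cast at h
      linarith
    rw [ih h1, ih h2]
    simp

lemma not_mem_boxN {d : ℕ} {v : ℤ} {x : Fin d → ℤ} (hx : x ∉ boxN d v) :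
    ∃ i, v < |x i| := by
  rw [mem_boxN] at hx
  push_neg at hx
  exact hx

lemma MM_summable (S : SpreadOut d L C₁ c₂ C₂ δ₂ δ₃) (n : ℕ) (φ : (Fin d → ℤ) → ℝ) :
    Summable (fun x => MM S n x * φ x) := by
  apply summable_of_ne_finset_zero (s := boxN d (n * ⌈L⌉₊ : ℤ))
  intro x hx
  obtain ⟨i, hi⟩ := not_mem_boxN hx
  rw [MM_vanish S n hi, zero_mul]

lemma MM_le_of_exp (S : SpreadOut d L C₁ c₂ C₂ δ₂ δ₃) (n : ℕ) (x : Fin d → ℤ)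
    (a : ℝ) (j : Fin d) :
    MM S n x * Real.exp (a * x j) ≤ ∑' z, MM S n z * Real.exp (a * z j) :=
  Summable.le_tsum (MM_summable S n (fun z => Real.exp (a * z j))) x
    (fun z _ => mul_nonneg (MM_nonneg S n z) (Real.exp_nonneg _))

end AuxMM
section AuxTilt

variable {d : ℕ} {L C₁ c₂ C₂ δ₂ δ₃ : ℝ}

noncomputable def Ecosh (S : SpreadOut d L C₁ c₂ C₂ δ₂ δ₃) (a : ℝ) (j : Fin d) : ℝ :=
  ∑ y ∈ boxA d L, S.D y * Real.cosh (a * (y j : ℝ))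

lemma Ecosh_nonneg (S : SpreadOut d L C₁ c₂ C₂ δ₂ δ₃) (a : ℝ) (j : Fin d) :
    0 ≤ Ecosh S a j :=
  Finset.sum_nonneg fun y _ => mul_nonneg (S.nonneg y) (Real.cosh_pos _).le

lemma tsum_shift_sub (S : SpreadOut d L C₁ c₂ C₂ δ₂ δ₃) (n : ℕ) (y : Fin d → ℤ)
    (a : ℝ) (j : Fin d) :
    Summable (fun x : Fin d → ℤ => MM S n (x - y) * Real.exp (a * x j)) ∧
    (∑' x : Fin d → ℤ, MM S n (x - y) * Real.exp (a * x j)) =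
      Real.exp (a * y j) * ∑' x : Fin d → ℤ, MM S n x * Real.exp (a * x j) := by
  set e := Equiv.addRight y with he
  set f : (Fin d → ℤ) → ℝ := fun z => MM S n (z - y) * Real.exp (a * z j) with hf
  have hcomp : (f ∘ e) = fun x => (MM S n x * Real.exp (a * x j)) * Real.exp (a * y j) := by
    funext x
    simp only [hf, he, Function.comp_apply, Equiv.coe_addRight]
    rw [add_sub_cancel_right]
    have h2 : ((x + y) j : ℤ) = x j + y j := rfl
    rw [h2]
    push_cast
    rw [mul_add, Real.exp_add]
    ring
  have hs1 : Summable (f ∘ e) := by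
    rw [hcomp]
    exact (MM_summable S n (fun z => Real.exp (a * z j))).mul_right _
  have hs : Summable f := e.summable_iff.mp hs1
  constructor
  · exact hs
  · calc (∑' x, f x) = ∑' x, f (e x) := (e.tsum_eq f).symm
      _ = ∑' x, (MM S n x * Real.exp (a * x j)) * Real.exp (a * y j) := by rw [← hcomp]; rfl
      _ = (∑' x, MM S n x * Real.exp (a * x j)) * Real.exp (a * y j) := tsum_mul_right
      _ = _ := by ring

lemma tsum_shift_add (S : SpreadOut d L C₁ c₂ C₂ δ₂ δ₃) (n : ℕ) (y : Fin d → ℤ)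
    (a : ℝ) (j : Fin d) :
    Summable (fun x : Fin d → ℤ => MM S n (x + y) * Real.exp (a * x j)) ∧
    (∑' x : Fin d → ℤ, MM S n (x + y) * Real.exp (a * x j)) =
      Real.exp (-(a * y j)) * ∑' x : Fin d → ℤ, MM S n x * Real.exp (a * x j) := by
  set e := Equiv.subRight y with he
  set f : (Fin d → ℤ) → ℝ := fun z => MM S n (z + y) * Real.exp (a * z j) with hf
  have hcomp : (f ∘ e) = fun x => (MM S n x * Real.exp (a * x j)) * Real.exp (-(a * y j)) := by
    funext x
    simp only [hf, he, Function.comp_apply, Equiv.subRight_apply]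
    rw [sub_add_cancel]
    have h2 : ((x - y) j : ℤ) = x j - y j := rfl
    rw [h2]
    push_cast
    rw [mul_sub, sub_eq_add_neg, Real.exp_add]
    ring
  have hs1 : Summable (f ∘ e) := by
    rw [hcomp]
    exact (MM_summable S n (fun z => Real.exp (a * z j))).mul_right _
  have hs : Summable f := e.summable_iff.mp hs1
  constructor
  · exact hs
  · calc (∑' x, f x) = ∑' x, f (e x) := (e.tsum_eq f).symm
      _ = ∑' x, (MM S n x * Real.exp (a * x j)) * Real.exp (-(a * y j)) := by rw [← hcomp]; rfl
      _ = (∑' x, MM S n x * Real.exp (a * x j)) * Real.exp (-(a * y j)) := tsum_mul_right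
      _ = _ := by ring

lemma tilt (S : SpreadOut d L C₁ c₂ C₂ δ₂ δ₃) (a : ℝ) (j : Fin d) :
    ∀ n : ℕ, (∑' x : Fin d → ℤ, MM S n x * Real.exp (a * x j)) = (Ecosh S a j) ^ n := by
  intro n
  induction n with
  | zero =>
    rw [tsum_eq_single (0 : Fin d → ℤ)]
    · norm_num [MM]
    · intro x hx
      rw [MM, if_neg hx, zero_mul]
  | succ n ih =>
    have hpt : ∀ x : Fin d → ℤ, MM S (n+1) x * Real.exp (a * x j) =
        ∑ y ∈ boxA d L, (S.D y * ((MM S n (x - y) * Real.exp (a * x j)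
          + MM S n (x + y) * Real.exp (a * x j)) / 2)) := by
      intro x
      conv_lhs => rw [MM]
      rw [Finset.sum_mul]
      exact Finset.sum_congr rfl fun y _ => by ring
    rw [tsum_congr hpt]
    rw [Summable.tsum_finsetSum (fun y _ => (((((tsum_shift_sub S n y a j).1).add
      ((tsum_shift_add S n y a j).1)).div_const 2).mul_left (S.D y)))]
    have hterm : ∀ y ∈ boxA d L,
        (∑' x : Fin d → ℤ, S.D y * ((MM S n (x - y) * Real.exp (a * x j)
          + MM S n (x + y) * Real.exp (a * x j)) / 2)) =
        S.D y * Real.cosh (a * y j) * (Ecosh S a j) ^ n := by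
      intro y _
      rw [tsum_mul_left, tsum_div_const,
        Summable.tsum_add (tsum_shift_sub S n y a j).1 (tsum_shift_add S n y a j).1,
        (tsum_shift_sub S n y a j).2, (tsum_shift_add S n y a j).2, ih,
        Real.cosh_eq]
      ring
    rw [Finset.sum_congr rfl hterm, ← Finset.sum_mul, ← Ecosh, pow_succ]
    ring

lemma MM_le_tilt (S : SpreadOut d L C₁ c₂ C₂ δ₂ δ₃) (n : ℕ) (x : Fin d → ℤ)
    (a : ℝ) (j : Fin d) :
    MM S n x ≤ Real.exp (-(a * x j)) * (Ecosh S a j) ^ n := by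
  have h := MM_le_of_exp S n x a j
  rw [tilt S a j n] at h
  have hpos : 0 < Real.exp (a * x j) := Real.exp_pos _
  calc MM S n x = (MM S n x * Real.exp (a * x j)) * Real.exp (-(a * x j)) := by
        rw [Real.exp_neg]
        field_simp
    _ ≤ (Ecosh S a j) ^ n * Real.exp (-(a * x j)) :=
        mul_le_mul_of_nonneg_right h (Real.exp_nonneg _)
    _ = _ := by ring

end AuxTilt
section AuxPP

variable {d : ℕ} {L C₁ c₂ C₂ δ₂ δ₃ : ℝ}

lemma norm_cancel (d : ℕ) : (2 * Real.pi) ^ (-(d : ℝ)) * (2 * Real.pi) ^ (d : ℕ) = 1 := by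
  have h2π : (0:ℝ) < 2 * Real.pi := by positivity
  rw [← Real.rpow_natCast (2 * Real.pi) d, ← Real.rpow_add h2π]
  norm_num

lemma cont_cosx (x : Fin d → ℤ) :
    Continuous (fun k : Fin d → ℝ => Real.cos (∑ i, k i * (x i : ℝ))) := by
  apply Real.continuous_cos.comp
  apply continuous_finset_sum
  intro i _
  exact (continuous_apply i).mul continuous_const

lemma integrableOn_box {f : (Fin d → ℝ) → ℝ} (hf : Continuous f) :
    MeasureTheory.IntegrableOn f (box d) :=
  hf.continuousOn.integrableOn_compact (isCompact_box d)

noncomputable def PP (S : SpreadOut d L C₁ c₂ C₂ δ₂ δ₃) (n : ℕ) (x : Fin d → ℤ) : ℝ :=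
  (2 * Real.pi) ^ (-(d : ℝ)) * ∫ k in box d, Real.cos (∑ i, k i * (x i : ℝ)) * (dF S k) ^ n

lemma PP_zero (S : SpreadOut d L C₁ c₂ C₂ δ₂ δ₃) (x : Fin d → ℤ) :
    PP S 0 x = if x = 0 then 1 else 0 := by
  simp only [PP, pow_zero, mul_one]
  rw [cos_box_integral x]
  split_ifs
  · exact norm_cancel d
  · exact mul_zero _

lemma sum_shift_eq (k : Fin d → ℝ) (x y : Fin d → ℤ) :
    (∑ i, k i * ((x - y) i : ℝ)) = (∑ i, k i * (x i : ℝ)) - ∑ i, k i * (y i : ℝ) ∧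
    (∑ i, k i * ((x + y) i : ℝ)) = (∑ i, k i * (x i : ℝ)) + ∑ i, k i * (y i : ℝ) := by
  constructor
  · rw [← Finset.sum_sub_distrib]
    apply Finset.sum_congr rfl
    intro i _
    have : ((x - y) i : ℤ) = x i - y i := rfl
    rw [this]
    push_cast
    ring
  · rw [← Finset.sum_add_distrib]
    apply Finset.sum_congr rfl
    intro i _
    have : ((x + y) i : ℤ) = x i + y i := rfl
    rw [this]
    push_cast
    ring

lemma PP_succ (S : SpreadOut d L C₁ c₂ C₂ δ₂ δ₃) (n : ℕ) (x : Fin d → ℤ) :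
    PP S (n+1) x = ∑ y ∈ boxA d L, S.D y * ((PP S n (x - y) + PP S n (x + y)) / 2) := by
  have hpt : ∀ k ∈ box d,
      Real.cos (∑ i, k i * (x i : ℝ)) * (dF S k) ^ (n+1) =
      ∑ y ∈ boxA d L, S.D y * ((Real.cos (∑ i, k i * ((x - y) i : ℝ)) * (dF S k) ^ n
        + Real.cos (∑ i, k i * ((x + y) i : ℝ)) * (dF S k) ^ n) / 2) := by
    intro k _
    have hkey : ∀ y : Fin d → ℤ,
        Real.cos (∑ i, k i * (x i : ℝ)) * Real.cos (∑ i, k i * (y i : ℝ)) =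
        (Real.cos (∑ i, k i * ((x - y) i : ℝ)) + Real.cos (∑ i, k i * ((x + y) i : ℝ))) / 2 := by
      intro y
      rw [(sum_shift_eq k x y).1, (sum_shift_eq k x y).2, Real.cos_sub, Real.cos_add]
      ring
    calc Real.cos (∑ i, k i * (x i : ℝ)) * (dF S k) ^ (n+1)
        = (Real.cos (∑ i, k i * (x i : ℝ)) * dF S k) * (dF S k) ^ n := by ring
      _ = (∑ y ∈ boxA d L, S.D y *
            (Real.cos (∑ i, k i * (x i : ℝ)) * Real.cos (∑ i, k i * (y i : ℝ)))) *
            (dF S k) ^ n := by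
          rw [dF, Finset.mul_sum]
          congr 1
          exact Finset.sum_congr rfl fun y _ => by ring
      _ = _ := by
          rw [Finset.sum_mul]
          apply Finset.sum_congr rfl
          intro y _
          rw [hkey y]
          ring
  rw [PP, MeasureTheory.setIntegral_congr_fun (measurableSet_box d) hpt]
  have hint : ∀ (z : Fin d → ℤ) (m : ℕ), MeasureTheory.IntegrableOn
      (fun k => Real.cos (∑ i, k i * (z i : ℝ)) * (dF S k) ^ m) (box d) :=
    fun z m => integrableOn_box ((cont_cosx z).mul ((dF_cont S).pow m))
  rw [MeasureTheory.integral_finset_sum _ (fun y _ => by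
    apply MeasureTheory.Integrable.const_mul
    apply MeasureTheory.Integrable.div_const
    exact (hint (x - y) n).add (hint (x + y) n))]
  rw [Finset.mul_sum]
  apply Finset.sum_congr rfl
  intro y _
  rw [MeasureTheory.integral_const_mul, MeasureTheory.integral_div,
    MeasureTheory.integral_add (hint (x - y) n) (hint (x + y) n)]
  simp only [PP]
  ring

lemma PP_eq_MM (S : SpreadOut d L C₁ c₂ C₂ δ₂ δ₃) (n : ℕ) (x : Fin d → ℤ) :
    PP S n x = MM S n x := by
  induction n generalizing x with
  | zero => rw [PP_zero, MM]
  | succ n ih =>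
    rw [PP_succ, MM]
    apply Finset.sum_congr rfl
    intro y _
    rw [ih (x - y), ih (x + y)]

end AuxPP
section AuxSeries

variable {d : ℕ} {L C₁ c₂ C₂ δ₂ δ₃ : ℝ}

lemma coeff_summable (t : ℝ) :
    Summable (fun n : ℕ => Real.exp (-t) * t ^ n / n.factorial) := by
  have h := (Real.summable_pow_div_factorial t).mul_left (Real.exp (-t))
  simpa [mul_div_assoc] using h

lemma exp_tsum_eq (u : ℝ) : Real.exp u = ∑' n : ℕ, u ^ n / n.factorial := by
  rw [Real.exp_eq_exp_ℝ, NormedSpace.exp_eq_tsum_div]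

lemma Ifun_eq_tsum (S : SpreadOut d L C₁ c₂ C₂ δ₂ δ₃) (t : ℝ) (ht : 0 ≤ t) (x : Fin d → ℤ) :
    Ifun S t 1 x = ∑' n : ℕ, (Real.exp (-t) * t ^ n / n.factorial) * MM S n x := by
  classical
  set f : ℕ → (Fin d → ℝ) → ℝ := fun n k =>
    Real.cos (∑ i, k i * (x i : ℝ)) * (Real.exp (-t) * ((t * dF S k) ^ n / n.factorial))
    with hfdef
  have hc : ∀ n, Continuous (f n) := by
    intro n
    apply (cont_cosx x).mul
    apply Continuous.mul continuous_const
    exact ((continuous_const.mul (dF_cont S)).pow n).div_const _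
  have hpt : ∀ k : Fin d → ℝ,
      Real.cos (∑ i, k i * (x i : ℝ)) * Real.exp (-t * (1 - 1 * dhat S.D k)) =
      ∑' n : ℕ, f n k := by
    intro k
    rw [one_mul, dhat_eq_dF]
    have h1 : -t * (1 - dF S k) = -t + t * dF S k := by ring
    rw [h1, Real.exp_add, exp_tsum_eq (t * dF S k)]
    simp only [hfdef]
    rw [tsum_mul_left, tsum_mul_left]
  have hbound : ∀ n k, |f n k| ≤ Real.exp (-t) * t ^ n / n.factorial := by
    intro n k
    have h1 : |t * dF S k| ≤ t := by
      rw [abs_mul, abs_of_nonneg ht]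
      nlinarith [abs_dF_le_one S k, abs_nonneg (dF S k)]
    have h2 : |(t * dF S k) ^ n| ≤ t ^ n := by
      rw [abs_pow]
      exact pow_le_pow_left₀ (abs_nonneg _) h1 n
    have h3 : |Real.cos (∑ i, k i * (x i : ℝ))| ≤ 1 := Real.abs_cos_le_one _
    have hfac : (0:ℝ) < (n.factorial : ℝ) := by positivity
    simp only [hfdef]
    rw [abs_mul, abs_mul, abs_div, abs_of_nonneg (Real.exp_nonneg (-t)),
      abs_of_nonneg (show (0:ℝ) ≤ (n.factorial : ℝ) from Nat.cast_nonneg _)]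
    calc |Real.cos (∑ i, k i * (x i : ℝ))| * (Real.exp (-t) * (|(t * dF S k) ^ n| / n.factorial))
        ≤ 1 * (Real.exp (-t) * (t ^ n / n.factorial)) := by
          apply mul_le_mul h3
          · apply mul_le_mul_of_nonneg_left _ (Real.exp_nonneg _)
            exact (div_le_div_iff_of_pos_right hfac).mpr h2
          · positivity
          · norm_num
      _ = Real.exp (-t) * t ^ n / n.factorial := by ring
  have hmeas : ∀ n, MeasureTheory.AEStronglyMeasurable (f n)
      (MeasureTheory.volume.restrict (box d)) :=
    fun n => (hc n).aestronglyMeasurable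
  have hV : MeasureTheory.volume (box d) ≠ ⊤ := (isCompact_box d).measure_lt_top.ne
  have hlint : ∀ n : ℕ, (∫⁻ k in box d, ‖f n k‖₊) ≤
      ENNReal.ofReal (Real.exp (-t) * t ^ n / n.factorial) * MeasureTheory.volume (box d) := by
    intro n
    refine le_trans (MeasureTheory.lintegral_mono (fun k => ?_))
      (le_of_eq (MeasureTheory.setLIntegral_const _ _))
    show ((‖f n k‖₊ : ENNReal)) ≤ ENNReal.ofReal (Real.exp (-t) * t ^ n / (n.factorial : ℝ))
    rw [show ((‖f n k‖₊ : ENNReal)) = ‖f n k‖ₑ from rfl, Real.enorm_eq_ofReal_abs]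
    exact ENNReal.ofReal_le_ofReal (hbound n k)
  have hsum_ne : (∑' n : ℕ, ∫⁻ k in box d, ‖f n k‖₊) ≠ ⊤ := by
    apply ne_top_of_le_ne_top _ (ENNReal.tsum_le_tsum hlint)
    rw [ENNReal.tsum_mul_right,
      ← ENNReal.ofReal_tsum_of_nonneg (fun n => by positivity) (coeff_summable t)]
    exact ENNReal.mul_ne_top ENNReal.ofReal_ne_top hV
  have hint_eq : ∀ n : ℕ, (∫ k in box d, f n k) =
      (Real.exp (-t) * t ^ n / n.factorial) *
        ∫ k in box d, Real.cos (∑ i, k i * (x i : ℝ)) * dF S k ^ n := by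
    intro n
    rw [← MeasureTheory.integral_const_mul]
    apply MeasureTheory.setIntegral_congr_fun (measurableSet_box d)
    intro k _
    simp only [hfdef]
    rw [mul_pow]
    ring
  calc Ifun S t 1 x
      = (2 * Real.pi) ^ (-(d:ℝ)) * ∫ k in box d, ∑' n : ℕ, f n k := by
        simp only [Ifun]
        rw [MeasureTheory.setIntegral_congr_fun (measurableSet_box d) (fun k _ => hpt k)]
    _ = (2 * Real.pi) ^ (-(d:ℝ)) * ∑' n : ℕ, ∫ k in box d, f n k := by
        rw [MeasureTheory.integral_tsum hmeas hsum_ne]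
    _ = ∑' n : ℕ, (Real.exp (-t) * t ^ n / n.factorial) * MM S n x := by
        rw [← tsum_mul_left]
        apply tsum_congr
        intro n
        rw [hint_eq n, ← PP_eq_MM]
        simp only [PP]
        ring

end AuxSeries
section AuxFinal

variable {d : ℕ} {L C₁ c₂ C₂ δ₂ δ₃ : ℝ}

lemma cosh_le_one_add_sq {u : ℝ} (hu : |u| ≤ 1) : Real.cosh u ≤ 1 + u ^ 2 := by
  have h1 : Real.cosh u ≤ Real.exp (u ^ 2 / 2) := Real.cosh_le_exp_half_sq u
  have hsq : u ^ 2 ≤ 1 := by nlinarith [sq_abs u, abs_nonneg u]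
  have hv0 : 0 ≤ u ^ 2 / 2 := by positivity
  have hv1 : u ^ 2 / 2 ≤ 1 / 2 := by linarith
  have h2 : Real.exp (u ^ 2 / 2) * (1 - u ^ 2 / 2) ≤ 1 := by
    have h3 : 1 - u ^ 2 / 2 ≤ Real.exp (-(u ^ 2 / 2)) := by
      have := Real.add_one_le_exp (-(u ^ 2 / 2))
      linarith
    calc Real.exp (u ^ 2 / 2) * (1 - u ^ 2 / 2)
        ≤ Real.exp (u ^ 2 / 2) * Real.exp (-(u ^ 2 / 2)) :=
          mul_le_mul_of_nonneg_left h3 (Real.exp_nonneg _)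
      _ = 1 := by rw [← Real.exp_add]; norm_num
  nlinarith [Real.exp_pos (u ^ 2 / 2), h1, h2]

lemma Ifun_nonneg (S : SpreadOut d L C₁ c₂ C₂ δ₂ δ₃) (t : ℝ) (ht : 0 ≤ t)
    (x : Fin d → ℤ) : 0 ≤ Ifun S t 1 x := by
  rw [Ifun_eq_tsum S t ht x]
  apply tsum_nonneg
  intro n
  have := MM_nonneg S n x
  positivity

lemma Ifun_le_master (S : SpreadOut d L C₁ c₂ C₂ δ₂ δ₃) (hd : 1 ≤ d) (hL : 1 ≤ L)
    (x : Fin d → ℤ) (t : ℝ) (ht : 0 ≤ t)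
    (c : ℝ) (hc : 0 ≤ c) (hcL : c * L ≤ 1) :
    Ifun S t 1 x ≤ Real.exp (-(c * supnorm x) + t * (c ^ 2 * sigma2 S / d)) := by
  have hne : Nonempty (Fin d) := ⟨⟨0, by omega⟩⟩
  obtain ⟨j, _, hj⟩ := Finset.exists_mem_eq_sup (Finset.univ : Finset (Fin d))
    Finset.univ_nonempty (fun i => (x i).natAbs)
  have hsup : supnorm x = |(x j : ℝ)| := by
    rw [supnorm, hj, Nat.cast_natAbs, Int.cast_abs]
  set a : ℝ := if x j < 0 then -c else c with ha
  have haxj : a * (x j : ℝ) = c * supnorm x := by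
    rw [hsup]
    by_cases hxj : x j < 0
    · rw [ha, if_pos hxj, abs_of_neg (by exact_mod_cast hxj : (x j : ℝ) < 0)]
      ring
    · rw [ha, if_neg hxj]
      push_neg at hxj
      rw [abs_of_nonneg (by exact_mod_cast hxj : (0:ℝ) ≤ (x j : ℝ))]
  have haa : a ^ 2 = c ^ 2 := by
    by_cases hxj : x j < 0 <;> simp [ha, hxj] <;> ring
  -- bound on Ecosh
  have hE : Ecosh S a j ≤ 1 + c ^ 2 * (sigma2 S / d) := by
    have hstep : Ecosh S a j ≤ ∑ y ∈ boxA d L, S.D y * (1 + (a * (y j : ℝ)) ^ 2) := by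
      apply Finset.sum_le_sum
      intro y _
      by_cases hD : S.D y = 0
      · rw [hD, zero_mul, zero_mul]
      · apply mul_le_mul_of_nonneg_left _ (S.nonneg y)
        apply cosh_le_one_add_sq
        have hyj : |(y j : ℝ)| ≤ L := abs_le_of_D_ne S hD j
        have habs : |a| = c := by
          by_cases hxj : x j < 0 <;>
            simp [ha, hxj, abs_of_nonneg hc, abs_neg]
        rw [abs_mul, habs]
        calc c * |(y j : ℝ)| ≤ c * L := mul_le_mul_of_nonneg_left hyj hc
          _ ≤ 1 := hcL
    have hexpand : ∑ y ∈ boxA d L, S.D y * (1 + (a * (y j : ℝ)) ^ 2) =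
        (∑ y ∈ boxA d L, S.D y) + c ^ 2 * ∑ y ∈ boxA d L, S.D y * (y j : ℝ) ^ 2 := by
      rw [Finset.mul_sum, ← Finset.sum_add_distrib]
      apply Finset.sum_congr rfl
      intro y _
      rw [mul_pow, haa]
      ring
    rw [hexpand, sum_D_eq_one S, moment_coord S hd j] at hstep
    exact hstep
  have hEnn : 0 ≤ Ecosh S a j := Ecosh_nonneg S a j
  -- series comparison
  rw [Ifun_eq_tsum S t ht x]
  set m := supnorm x with hm
  have hterm : ∀ n : ℕ, (Real.exp (-t) * t ^ n / n.factorial) * MM S n x ≤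
      (Real.exp (-t) * t ^ n / n.factorial) *
        (Real.exp (-(c * m)) * (Ecosh S a j) ^ n) := by
    intro n
    apply mul_le_mul_of_nonneg_left _ (by positivity)
    have h := MM_le_tilt S n x a j
    rwa [haxj] at h
  have hsum2 : Summable (fun n : ℕ => (Real.exp (-t) * t ^ n / n.factorial) *
      (Real.exp (-(c * m)) * (Ecosh S a j) ^ n)) := by
    have h := (Real.summable_pow_div_factorial (t * Ecosh S a j)).mul_left
      (Real.exp (-t) * Real.exp (-(c * m)))
    apply h.congr
    intro n
    rw [mul_pow]
    ring
  have hsum1 : Summable (fun n : ℕ => (Real.exp (-t) * t ^ n / n.factorial) * MM S n x) := by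
    apply Summable.of_nonneg_of_le _ hterm hsum2
    intro n
    have := MM_nonneg S n x
    positivity
  calc (∑' n : ℕ, (Real.exp (-t) * t ^ n / n.factorial) * MM S n x)
      ≤ ∑' n : ℕ, (Real.exp (-t) * t ^ n / n.factorial) *
          (Real.exp (-(c * m)) * (Ecosh S a j) ^ n) := Summable.tsum_le_tsum hterm hsum1 hsum2
    _ = (Real.exp (-t) * Real.exp (-(c * m))) *
          ∑' n : ℕ, (t * Ecosh S a j) ^ n / n.factorial := by
        rw [← tsum_mul_left]
        apply tsum_congr
        intro n
        rw [mul_pow]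
        ring
    _ = Real.exp (-t) * Real.exp (-(c * m)) * Real.exp (t * Ecosh S a j) := by
        rw [← exp_tsum_eq]
    _ ≤ Real.exp (-(c * m) + t * (c ^ 2 * sigma2 S / d)) := by
        rw [← Real.exp_add, ← Real.exp_add]
        apply Real.exp_le_exp.mpr
        have h5 : t * Ecosh S a j ≤ t * (1 + c ^ 2 * (sigma2 S / d)) :=
          mul_le_mul_of_nonneg_left hE ht
        have h7 : t * (1 + c ^ 2 * (sigma2 S / d)) = t + t * (c ^ 2 * sigma2 S / d) := by
          ring
        linarith

end AuxFinal
theorem stmt14 (d : ℕ) (hd : 1 ≤ d) (L C₁ c₂ C₂ δ₂ δ₃ : ℝ) (hL : 1 ≤ L)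
    (hC₁ : 0 < C₁) (hc₂ : 0 < c₂) (hC₂ : 0 < C₂) (hδ₂ : 0 < δ₂) (hδ₃ : 0 < δ₃)
    (S : SpreadOut d L C₁ c₂ C₂ δ₂ δ₃) (x : Fin d → ℤ) (t : ℝ) (ht : 0 ≤ t) :
    0 ≤ Ifun S t 1 x ∧
    Ifun S t 1 x ≤ Real.exp (-(supnorm x) / L + sigma2 S * t / ((d : ℝ) * L ^ 2)) ∧
    ((d : ℝ) * L * supnorm x / (2 * sigma2 S) ≤ t →
      Ifun S t 1 x ≤ Real.exp (-((d : ℝ) * supnorm x ^ 2) / (4 * sigma2 S * t))) := by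
  have hd0 : (0:ℝ) < d := by exact_mod_cast hd
  have hd' : (d:ℝ) ≠ 0 := ne_of_gt hd0
  have hL0 : (0:ℝ) < L := by linarith
  have hL' : L ≠ 0 := ne_of_gt hL0
  have hσ : 0 < sigma2 S := sigma2_pos S hc₂ hL
  have hσ' : sigma2 S ≠ 0 := ne_of_gt hσ
  refine ⟨Ifun_nonneg S t ht x, ?_, ?_⟩
  · have h := Ifun_le_master S hd hL x t ht (1/L) (by positivity)
      (by rw [one_div_mul_cancel hL'])
    have heq : -(1/L * supnorm x) + t * ((1/L) ^ 2 * sigma2 S / d) =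
        -(supnorm x) / L + sigma2 S * t / ((d : ℝ) * L ^ 2) := by
      field_simp
    rwa [heq] at h
  · intro htt
    by_cases ht0 : t = 0
    · subst ht0
      have h := Ifun_le_master S hd hL x 0 le_rfl 0 le_rfl (by linarith)
      norm_num at h ⊢
      exact h
    · have htpos : 0 < t := lt_of_le_of_ne ht (Ne.symm ht0)
      have ht' : t ≠ 0 := ht0
      set m := supnorm x with hm
      have hm0 : 0 ≤ m := supnorm_nonneg x
      set c : ℝ := (d : ℝ) * m / (2 * sigma2 S * t) with hc
      have hcpos : 0 ≤ c := by positivity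
      have hcL : c * L ≤ 1 := by
        rw [div_le_iff₀ (by positivity : (0:ℝ) < 2 * sigma2 S)] at htt
        rw [hc, div_mul_eq_mul_div, div_le_one (by positivity)]
        nlinarith
      have h := Ifun_le_master S hd hL x t ht c hcpos hcL
      have heq : -(c * m) + t * (c ^ 2 * sigma2 S / d) =
          -((d : ℝ) * m ^ 2) / (4 * sigma2 S * t) := by
        rw [hc]
        field_simp
        ring
      rwa [heq] at h
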